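/- Let f : ℝⁿ × ℝᵐ → ℝⁿ and φ : ℝⁿ × ℝᵐ → ℝᵏ be continuously differentiable, let C : ℝⁿ → ℝ be differentiable, and let t_f > 0. Let (q,u,p,λ) : [0,t_f] → ℝⁿ × ℝᵐ × ℝⁿ × ℝᵏ be a continuously differentiable solution of the adjoint DAE system: q̇ = f(q,u), ṗ = −D_qf(q,u)ᵀ p − D_qφ(q,u)ᵀ λ, 0 = φ(q,u), 0 = D_uf(q,u)ᵀ p + D_uφ(q,u)ᵀ λ, satisfying the terminal condition p(t_f) = ∇C(q(t_f)), and let (δq, δu) : [0,t_f] → ℝⁿ × ℝᵐ be a continuously differentiable solution of the variational equations δq̇ = D_qf(q,u) δq + D_uf(q,u) δu and 0 = D_qφ(q,u) δq + D_uφ(q,u) δu along (q,u). Then ⟨∇C(q(t_f)), δq(t_f)⟩ = ⟨p(0), δq(0)⟩, i.e., p(0) is the adjoint sensitivity of the terminal cost C(q(t_f)) with respect to a perturbation δq(0) of the initial condition. -/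

import Mathlib

/-!
Along the two solutions the pairing `t ↦ ⟪p t, δq t⟫` has zero derivative: the `q`-Jacobians
cancel by the definition of the adjoint, and the remaining terms `⟪p, D_uf δu⟫` and
`⟪λ, D_qφ δq⟫` agree because the algebraic equations of the adjoint system and of the
variational system are transposes of each other. Hence the pairing is constant on `[0, t_f]`,
and the terminal condition identifies its value at `t_f`.
-/

open scoped RealInnerProductSpace

noncomputable section

abbrev Euc (n : ℕ) : Type := EuclideanSpace ℝ (Fin n)

/-- Partial Jacobian `D_qF(q,u)` with respect to the first argument. -/
noncomputable def Dq {n m k : ℕ} (F : Euc n × Euc m → Euc k) (q : Euc n) (u : Euc m) :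
    Euc n →L[ℝ] Euc k :=
  fderiv ℝ (fun q' => F (q', u)) q

/-- Partial Jacobian `D_uF(q,u)` with respect to the second argument. -/
noncomputable def Du {n m k : ℕ} (F : Euc n × Euc m → Euc k) (q : Euc n) (u : Euc m) :
    Euc m →L[ℝ] Euc k :=
  fderiv ℝ (fun u' => F (q, u')) u

/-- `D_qF(q,u)ᵀ`, the transpose (adjoint) of the partial Jacobian in `q`. -/
noncomputable def DqT {n m k : ℕ} (F : Euc n × Euc m → Euc k) (q : Euc n) (u : Euc m) :
    Euc k →L[ℝ] Euc n :=
  ContinuousLinearMap.adjoint (Dq F q u)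

/-- `D_uF(q,u)ᵀ`, the transpose (adjoint) of the partial Jacobian in `u`. -/
noncomputable def DuT {n m k : ℕ} (F : Euc n × Euc m → Euc k) (q : Euc n) (u : Euc m) :
    Euc k →L[ℝ] Euc m :=
  ContinuousLinearMap.adjoint (Du F q u)

/-- Partial gradient `∇_qL(q,u)`. -/
noncomputable def gradQ {n m : ℕ} (L : Euc n × Euc m → ℝ) (q : Euc n) (u : Euc m) : Euc n :=
  gradient (fun q' => L (q', u)) q

/-- Partial gradient `∇_uL(q,u)`. -/
noncomputable def gradU {n m : ℕ} (L : Euc n × Euc m → ℝ) (q : Euc n) (u : Euc m) : Euc m :=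
  gradient (fun u' => L (q, u')) u

open ContinuousLinearMap Set

theorem constant_of_hasDerivAt_zero {E : Type*} [NormedAddCommGroup E] [NormedSpace ℝ E]
    {f : ℝ → E} {a b : ℝ} (hderiv : ∀ x ∈ Icc a b, HasDerivAt f 0 x) :
    ∀ x ∈ Icc a b, f x = f a :=
  constant_of_has_deriv_right_zero
    (fun x hx => (hderiv x hx).continuousAt.continuousWithinAt)
    (fun x hx => (hderiv x (Ico_subset_Icc_self hx)).hasDerivWithinAt)

section Adjoint

variable {E F K M : Type*}
  [NormedAddCommGroup E] [InnerProductSpace ℝ E]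
  [NormedAddCommGroup F] [InnerProductSpace ℝ F] [CompleteSpace F]
  [NormedAddCommGroup K] [InnerProductSpace ℝ K] [CompleteSpace K]
  [NormedAddCommGroup M] [InnerProductSpace ℝ M] [CompleteSpace M]

theorem inner_constraint_eq_inner_control {Au : M →L[ℝ] F} {Bq : E →L[ℝ] K}
    {Bu : M →L[ℝ] K} {p : F} {lam : K} {δq : E} {δu : M}
    (hadj : adjoint Au p + adjoint Bu lam = 0) (hvar : Bq δq + Bu δu = 0) :
    ⟪lam, Bq δq⟫ = ⟪p, Au δu⟫ := by
  have hδu : ⟪adjoint Au p + adjoint Bu lam, δu⟫ = 0 := by rw [hadj, inner_zero_left]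
  rw [inner_add_left, adjoint_inner_left, adjoint_inner_left] at hδu
  rw [eq_neg_of_add_eq_zero_left hvar, inner_neg_right]
  linarith

variable [CompleteSpace E]

theorem inner_adjoint_add_adjoint_eq_inner {Aq : E →L[ℝ] F} {Au : M →L[ℝ] F}
    {Bq : E →L[ℝ] K} {Bu : M →L[ℝ] K} {p : F} {lam : K} {δq : E} {δu : M}
    (hadj : adjoint Au p + adjoint Bu lam = 0) (hvar : Bq δq + Bu δu = 0) :
    ⟪adjoint Aq p + adjoint Bq lam, δq⟫ = ⟪p, Aq δq + Au δu⟫ := by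
  rw [inner_add_left, adjoint_inner_left, adjoint_inner_left, inner_add_right,
    inner_constraint_eq_inner_control hadj hvar]

theorem hasDerivAt_inner_costate_tangent_eq_zero {Aq : E →L[ℝ] E} {Au : M →L[ℝ] E}
    {Bq : E →L[ℝ] K} {Bu : M →L[ℝ] K} {p δq : ℝ → E} {lam : ℝ → K} {δu : ℝ → M} {t : ℝ}
    (hp : HasDerivAt p (-(adjoint Aq (p t)) - adjoint Bq (lam t)) t)
    (hδq : HasDerivAt δq (Aq (δq t) + Au (δu t)) t)
    (hadj : adjoint Au (p t) + adjoint Bu (lam t) = 0) (hvar : Bq (δq t) + Bu (δu t) = 0) :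
    HasDerivAt (fun s => ⟪p s, δq s⟫) 0 t := by
  have h := hp.inner ℝ hδq
  rwa [← neg_add', inner_neg_left, inner_adjoint_add_adjoint_eq_inner hadj hvar,
    add_neg_cancel] at h

end Adjoint

theorem adjoint_sensitivity_terminal_cost_general {n m k : ℕ}
    (f : Euc n × Euc m → Euc n) (φ : Euc n × Euc m → Euc k) (C : Euc n → ℝ)
    (tf : ℝ) (htf : 0 < tf)
    (q : ℝ → Euc n) (u : ℝ → Euc m) (p : ℝ → Euc n) (lam : ℝ → Euc k)
    (δq : ℝ → Euc n) (δu : ℝ → Euc m)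
    (hpode : ∀ t ∈ Set.Icc (0 : ℝ) tf,
      HasDerivAt p (-(DqT f (q t) (u t) (p t)) - DqT φ (q t) (u t) (lam t)) t)
    (hadj : ∀ t ∈ Set.Icc (0 : ℝ) tf,
      DuT f (q t) (u t) (p t) + DuT φ (q t) (u t) (lam t) = 0)
    (hδqode : ∀ t ∈ Set.Icc (0 : ℝ) tf,
      HasDerivAt δq (Dq f (q t) (u t) (δq t) + Du f (q t) (u t) (δu t)) t)
    (hδconstr : ∀ t ∈ Set.Icc (0 : ℝ) tf,
      Dq φ (q t) (u t) (δq t) + Du φ (q t) (u t) (δu t) = 0)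
    (hterm : p tf = gradient C (q tf)) :
    ⟪gradient C (q tf), δq tf⟫ = ⟪p 0, δq 0⟫ := by
  have hconst := constant_of_hasDerivAt_zero fun t ht =>
    hasDerivAt_inner_costate_tangent_eq_zero (hpode t ht) (hδqode t ht) (hadj t ht)
      (hδconstr t ht)
  rw [← hterm]
  exact hconst tf (right_mem_Icc.2 htf.le)

/-- adjoint sensitivity of a terminal cost. Along a solution of the
adjoint DAE system with terminal condition `p(t_f) = ∇C(q(t_f))` and a solution of
the variational equations, `⟨∇C(q(t_f)), δq(t_f)⟩ = ⟨p(0), δq(0)⟩`. -/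
theorem adjoint_sensitivity_terminal_cost {n m k : ℕ}
    (f : Euc n × Euc m → Euc n) (φ : Euc n × Euc m → Euc k) (C : Euc n → ℝ)
    (hf : ContDiff ℝ 1 f) (hφ : ContDiff ℝ 1 φ) (hC : Differentiable ℝ C)
    (tf : ℝ) (htf : 0 < tf)
    (q : ℝ → Euc n) (u : ℝ → Euc m) (p : ℝ → Euc n) (lam : ℝ → Euc k)
    (δq : ℝ → Euc n) (δu : ℝ → Euc m)
    (hq : ContDiff ℝ 1 q) (hu : ContDiff ℝ 1 u) (hp : ContDiff ℝ 1 p)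
    (hlam : ContDiff ℝ 1 lam) (hδq : ContDiff ℝ 1 δq) (hδu : ContDiff ℝ 1 δu)
    (hqode : ∀ t ∈ Set.Icc (0 : ℝ) tf, HasDerivAt q (f (q t, u t)) t)
    (hpode : ∀ t ∈ Set.Icc (0 : ℝ) tf,
      HasDerivAt p (-(DqT f (q t) (u t) (p t)) - DqT φ (q t) (u t) (lam t)) t)
    (hconstr : ∀ t ∈ Set.Icc (0 : ℝ) tf, φ (q t, u t) = 0)
    (hadj : ∀ t ∈ Set.Icc (0 : ℝ) tf,
      DuT f (q t) (u t) (p t) + DuT φ (q t) (u t) (lam t) = 0)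
    (hδqode : ∀ t ∈ Set.Icc (0 : ℝ) tf,
      HasDerivAt δq (Dq f (q t) (u t) (δq t) + Du f (q t) (u t) (δu t)) t)
    (hδconstr : ∀ t ∈ Set.Icc (0 : ℝ) tf,
      Dq φ (q t) (u t) (δq t) + Du φ (q t) (u t) (δu t) = 0)
    (hterm : p tf = gradient C (q tf)) :
    ⟪gradient C (q tf), δq tf⟫ = ⟪p 0, δq 0⟫ :=
  adjoint_sensitivity_terminal_cost_general f φ C tf htf q u p lam δq δu hpode hadj hδqode hδconstr
    hterm

end
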